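/- For all ξ, η with 0 < ξ, η < 1: H_{(ξ,η)} is mixing with respect to the Haar probability measure μ if and only if H_{(1-ξ,1-η)} is mixing with respect to μ. -/

import Mathlib

open MeasureTheory Filter Topology

noncomputable section

/-- The torus `𝕋² = ℝ²/ℤ²`, realized as `AddCircle 1 × AddCircle 1`. -/
abbrev Torus := AddCircle (1:ℝ) × AddCircle (1:ℝ)

/-- The Haar probability measure `μ` on `𝕋²`. -/
noncomputable def μ : Measure Torus := volume

/-- The representative in `[0,1)` of a point of the circle `ℝ/ℤ`. -/
noncomputable def rep (z : AddCircle (1:ℝ)) : ℝ := (AddCircle.equivIco 1 0 z : ℝ)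

/-- The non-monotonic shear `F_η`, defined on representatives `(x,y) ∈ [0,1)²` by
`F_η(x,y) = (x + y/(1-η) mod 1, y)` if `y ≤ 1-η`, and `(x + (1-y)/η mod 1, y)` if `y ≥ 1-η`. -/
noncomputable def Fmap (η : ℝ) (z : Torus) : Torus :=
  (z.1 + (↑(if rep z.2 ≤ 1 - η then rep z.2 / (1 - η) else (1 - rep z.2) / η) :
      AddCircle (1:ℝ)), z.2)

/-- The non-monotonic shear `G_ξ`, defined on representatives `(x,y) ∈ [0,1)²` by
`G_ξ(x,y) = (x, y + x/(1-ξ) mod 1)` if `x ≤ 1-ξ`, and `(x, y + (1-x)/ξ mod 1)` if `x ≥ 1-ξ`. -/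
noncomputable def Gmap (ξ : ℝ) (z : Torus) : Torus :=
  (z.1, z.2 + (↑(if rep z.1 ≤ 1 - ξ then rep z.1 / (1 - ξ) else (1 - rep z.1) / ξ) :
      AddCircle (1:ℝ)))

/-- The composition `H_{(ξ,η)} = G_ξ ∘ F_η`. -/
noncomputable def Hmap (ξ η : ℝ) : Torus → Torus := Gmap ξ ∘ Fmap η

/-- A map `f` of `𝕋²` is mixing (w.r.t. the Haar probability measure `μ`) if
`μ(fⁿ(B) ∩ A) → μ(A)·μ(B)` for all measurable `A, B ⊆ 𝕋²`. -/
def Mixing (f : Torus → Torus) : Prop :=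
  ∀ A B : Set Torus, MeasurableSet A → MeasurableSet B →
    Tendsto (fun n : ℕ => μ (f^[n] '' B ∩ A)) atTop (𝓝 (μ A * μ B))


/-!
Let `R` be the negation of `𝕋²`. The tent profiles satisfy `tent (1 - a) u = tent a (1 - u)`,
which on the circle reads `circleTent (1 - a) w = circleTent a (-w)`; hence
`F_{1-η} = R ∘ F_η⁻¹ ∘ R` and `G_{1-ξ} = R ∘ G_ξ⁻¹ ∘ R`. Therefore
`H_{(1-ξ,1-η)} = R ∘ G_ξ⁻¹ ∘ F_η⁻¹ ∘ R = (R ∘ F_η) ∘ H_{(ξ,η)}⁻¹ ∘ (R ∘ F_η)⁻¹`.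
All maps involved preserve Haar measure (the shears are skew products by rotations), and mixing
is invariant under measure-preserving conjugacy and under inversion.
-/

namespace MeasureTheory.MeasurePreserving

variable {α β : Type*} [MeasurableSpace α] [MeasurableSpace β]

lemma measure_image_equiv {νa : Measure α} {νb : Measure β} {e : α ≃ᵐ β}
    (he : MeasurePreserving e νa νb) (s : Set α) : νb (e '' s) = νa s := by
  rw [e.image_eq_preimage_symm]
  exact (he.symm e).measure_preimage_equiv s

lemma measure_image_iterate_equiv {ν : Measure α} {e : α ≃ᵐ α} (he : MeasurePreserving e ν ν)
    (n : ℕ) (s : Set α) : ν (e^[n] '' s) = ν s := by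
  induction n generalizing s with
  | zero => simp
  | succ n ih => rw [Function.iterate_succ, Set.image_comp, ih, he.measure_image_equiv]

end MeasureTheory.MeasurePreserving

lemma Mixing.conj {e : Torus ≃ᵐ Torus} (he : MeasurePreserving e μ μ) {f : Torus → Torus}
    (hf : Mixing f) : Mixing (e ∘ f ∘ e.symm) := by
  intro A B hA hB
  have hsc : Function.Semiconj e.symm (e ∘ f ∘ e.symm) f := fun x => by simp
  have key (n : ℕ) :
      μ ((e ∘ f ∘ e.symm)^[n] '' B ∩ A) = μ (f^[n] '' (e.symm '' B) ∩ e.symm '' A) := by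
    rw [← (he.symm e).measure_image_equiv, Set.image_inter e.symm.injective,
      (hsc.iterate_right n).set_image]
  have := hf (e.symm '' A) (e.symm '' B) (e.symm.measurableSet_image.2 hA)
    (e.symm.measurableSet_image.2 hB)
  rw [(he.symm e).measure_image_equiv, (he.symm e).measure_image_equiv] at this
  simpa only [key] using this

lemma mixing_conj_iff {e : Torus ≃ᵐ Torus} (he : MeasurePreserving e μ μ) {f : Torus → Torus} :
    Mixing (e ∘ f ∘ e.symm) ↔ Mixing f := by
  refine ⟨fun h => ?_, Mixing.conj he⟩
  simpa [Function.comp_def] using Mixing.conj (he.symm e) h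

lemma Mixing.symm {e : Torus ≃ᵐ Torus} (he : MeasurePreserving e μ μ) (h : Mixing e) :
    Mixing e.symm := by
  intro A B hA hB
  have key (n : ℕ) : μ (e.symm^[n] '' B ∩ A) = μ (e^[n] '' A ∩ B) := by
    rw [← he.measure_image_iterate_equiv n, Set.image_inter (e.injective.iterate n),
      ((Function.LeftInverse.iterate e.apply_symm_apply n)).image_image, Set.inter_comm]
  simpa only [key, mul_comm] using h B A hB hA

lemma mixing_symm_iff {e : Torus ≃ᵐ Torus} (he : MeasurePreserving e μ μ) :
    Mixing e.symm ↔ Mixing e :=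
  ⟨fun h => by simpa using Mixing.symm (he.symm e) h, Mixing.symm he⟩

lemma rep_coe (x : ℝ) : rep x = Int.fract x := by
  simp [rep]

lemma coe_rep (w : AddCircle (1:ℝ)) : (rep w : AddCircle (1:ℝ)) = w :=
  AddCircle.coe_equivIco

lemma measurable_rep : Measurable rep :=
  measurable_subtype_coe.comp (AddCircle.measurableEquivIco 1 0).measurable

lemma rep_mem_Ico (w : AddCircle (1:ℝ)) : rep w ∈ Set.Ico 0 1 := by
  simpa [rep] using (AddCircle.equivIco 1 0 w).2

lemma rep_eq_zero_iff {w : AddCircle (1:ℝ)} : rep w = 0 ↔ w = 0 :=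
  ⟨fun h => by rw [← coe_rep w, h, AddCircle.coe_zero], fun h => by simpa [h] using rep_coe 0⟩

lemma rep_neg {w : AddCircle (1:ℝ)} (hw : w ≠ 0) : rep (-w) = 1 - rep w := by
  rw [← coe_rep w, ← AddCircle.coe_neg, rep_coe, rep_coe, Int.fract_neg]
  rwa [← rep_coe, coe_rep, Ne, rep_eq_zero_iff]

def tent (a u : ℝ) : ℝ := if u ≤ 1 - a then u / (1 - a) else (1 - u) / a

lemma tent_zero {a : ℝ} (ha : a ≤ 1) : tent a 0 = 0 := by
  simp [tent, ha]

lemma measurable_tent (a : ℝ) : Measurable (tent a) :=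
  Measurable.ite (measurableSet_le measurable_id measurable_const)
    (measurable_id.div_const _) ((measurable_const.sub measurable_id).div_const _)

lemma tent_one_sub (a : ℝ) {u : ℝ} (hu0 : 0 < u) (hu1 : u < 1) :
    tent (1 - a) u = tent a (1 - u) := by
  simp only [tent, sub_sub_cancel]
  split_ifs with h h' h'
  · obtain rfl : a = u := by linarith
    rw [div_self hu0.ne', div_self (by linarith)]
  all_goals first | rfl | linarith

/-- `Fmap η z = (z.1 + circleTent η z.2, z.2)` and `Gmap ξ z = (z.1, z.2 + circleTent ξ z.1)`
hold definitionally. -/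
def circleTent (a : ℝ) (w : AddCircle (1:ℝ)) : AddCircle (1:ℝ) := (tent a (rep w) : ℝ)

lemma measurable_circleTent (a : ℝ) : Measurable (circleTent a) :=
  (AddCircle.continuous_mk' 1).measurable.comp ((measurable_tent a).comp measurable_rep)

lemma circleTent_one_sub {a : ℝ} (ha0 : 0 ≤ a) (ha1 : a ≤ 1) (w : AddCircle (1:ℝ)) :
    circleTent (1 - a) w = circleTent a (-w) := by
  rcases eq_or_ne w 0 with rfl | hw
  · simp [circleTent, rep_eq_zero_iff.2, tent_zero ha1, tent_zero (a := 1 - a) (by linarith)]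
  · have hpos : 0 < rep w := (rep_mem_Ico w).1.lt_of_ne' (rep_eq_zero_iff.not.2 hw)
    rw [circleTent, circleTent, rep_neg hw, tent_one_sub a hpos (rep_mem_Ico w).2]

section Skew

variable {X G : Type*} [MeasurableSpace X] [MeasurableSpace G] [AddGroup G] [MeasurableAdd₂ G]
  [MeasurableSub₂ G]

def skewAddEquiv {φ : X → G} (hφ : Measurable φ) : X × G ≃ᵐ X × G where
  toFun p := (p.1, p.2 + φ p.1)
  invFun p := (p.1, p.2 - φ p.1)
  left_inv p := by simp
  right_inv p := by simp
  measurable_toFun := measurable_fst.prodMk (measurable_snd.add (hφ.comp measurable_fst))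
  measurable_invFun := measurable_fst.prodMk (measurable_snd.sub (hφ.comp measurable_fst))

lemma measurePreserving_skewAddEquiv {φ : X → G} (hφ : Measurable φ) (νX : Measure X)
    (νG : Measure G) [SFinite νX] [SFinite νG] [νG.IsAddRightInvariant] :
    MeasurePreserving (skewAddEquiv hφ) (νX.prod νG) (νX.prod νG) :=
  (MeasurePreserving.id νX).skew_product (skewAddEquiv hφ).measurable.snd
    (ae_of_all _ fun x => map_add_right_eq_self νG (φ x))

end Skew

def fmapEquiv (η : ℝ) : Torus ≃ᵐ Torus :=
  MeasurableEquiv.prodComm.trans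
    ((skewAddEquiv (measurable_circleTent η)).trans MeasurableEquiv.prodComm)

def gmapEquiv (ξ : ℝ) : Torus ≃ᵐ Torus := skewAddEquiv (measurable_circleTent ξ)

lemma measurePreserving_fmapEquiv (η : ℝ) : MeasurePreserving (fmapEquiv η) μ μ :=
  (Measure.measurePreserving_swap.comp (measurePreserving_skewAddEquiv _ _ _)).comp
    Measure.measurePreserving_swap

lemma measurePreserving_gmapEquiv (ξ : ℝ) : MeasurePreserving (gmapEquiv ξ) μ μ :=
  measurePreserving_skewAddEquiv _ _ _

lemma measurePreserving_neg_torus : MeasurePreserving (MeasurableEquiv.neg Torus) μ μ :=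
  (Measure.measurePreserving_neg volume).prod (Measure.measurePreserving_neg volume)

lemma Fmap_one_sub {η : ℝ} (h0 : 0 ≤ η) (h1 : η ≤ 1) :
    Fmap (1 - η) = Neg.neg ∘ (fmapEquiv η).symm ∘ Neg.neg := by
  ext z
  · show z.1 + circleTent (1 - η) z.2 = -(-z.1 - circleTent η (-z.2))
    rw [circleTent_one_sub h0 h1, neg_sub, sub_neg_eq_add, add_comm]
  · exact (neg_neg z.2).symm

lemma Gmap_one_sub {ξ : ℝ} (h0 : 0 ≤ ξ) (h1 : ξ ≤ 1) :
    Gmap (1 - ξ) = Neg.neg ∘ (gmapEquiv ξ).symm ∘ Neg.neg := by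
  ext z
  · exact (neg_neg z.1).symm
  · show z.2 + circleTent (1 - ξ) z.1 = -(-z.2 - circleTent ξ (-z.1))
    rw [circleTent_one_sub h0 h1, neg_sub, sub_neg_eq_add, add_comm]

def hmapEquiv (ξ η : ℝ) : Torus ≃ᵐ Torus := (fmapEquiv η).trans (gmapEquiv ξ)

lemma measurePreserving_hmapEquiv (ξ η : ℝ) : MeasurePreserving (hmapEquiv ξ η) μ μ :=
  (measurePreserving_gmapEquiv ξ).comp (measurePreserving_fmapEquiv η)

lemma coe_hmapEquiv (ξ η : ℝ) : ⇑(hmapEquiv ξ η) = Hmap ξ η := rfl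

def negFmapEquiv (η : ℝ) : Torus ≃ᵐ Torus := (fmapEquiv η).trans (MeasurableEquiv.neg Torus)

lemma measurePreserving_negFmapEquiv (η : ℝ) : MeasurePreserving (negFmapEquiv η) μ μ :=
  measurePreserving_neg_torus.comp (measurePreserving_fmapEquiv η)

lemma Hmap_one_sub {ξ η : ℝ} (hξ0 : 0 ≤ ξ) (hξ1 : ξ ≤ 1) (hη0 : 0 ≤ η) (hη1 : η ≤ 1) :
    Hmap (1 - ξ) (1 - η) = negFmapEquiv η ∘ (hmapEquiv ξ η).symm ∘ (negFmapEquiv η).symm := by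
  ext1 z
  simp [Hmap, hmapEquiv, negFmapEquiv, Fmap_one_sub hη0 hη1, Gmap_one_sub hξ0 hξ1]

/-- For all `0 < ξ, η < 1`: `H_{(ξ,η)}` is mixing w.r.t. `μ` iff `H_{(1-ξ,1-η)}` is. -/
theorem mixing_reflection (ξ η : ℝ) (hξ0 : 0 < ξ) (hξ1 : ξ < 1)
    (hη0 : 0 < η) (hη1 : η < 1) :
    Mixing (Hmap ξ η) ↔ Mixing (Hmap (1-ξ) (1-η)) := by
  rw [Hmap_one_sub hξ0.le hξ1.le hη0.le hη1.le,
    mixing_conj_iff (measurePreserving_negFmapEquiv η),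
    mixing_symm_iff (measurePreserving_hmapEquiv ξ η), coe_hmapEquiv]
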